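/- In M_n(ℂ)^{⊗(m+1)} with m ≥ 1, for every tuple (j_1,…,j_m) ∈ (Fin n)^m: u_m · (e_{j_1} ⊗ ⋯ ⊗ e_{j_m} ⊗ 1) · u_mᴴ = e_{j_1} ⊗ ⋯ ⊗ e_{j_{m−1}} ⊗ ( Σ_{k∈Fin n} e_{j_m − k} ⊗ f_k ), where the subtraction j_m − k is taken in Fin n. -/

import Mathlib

open Matrix Kronecker

noncomputable section

/-- The primitive `n`-th root of unity `exp(2πi/n)`. -/
def omega (n : ℕ) : ℂ := Complex.exp (2 * Real.pi * Complex.I / n)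

/-- The diagonal matrix unit `e_i` with a `1` in entry `(i,i)`. -/
def eM (n : ℕ) (i : Fin n) : Matrix (Fin n) (Fin n) ℂ := Matrix.single i i 1

/-- The cyclic shift matrix `w`, with `w(a,b) = 1` iff `b = a + 1` (mod `n`). -/
def wM (n : ℕ) [NeZero n] : Matrix (Fin n) (Fin n) ℂ :=
  Matrix.of fun a b => if b = a + 1 then 1 else 0

/-- The spectral projections `f_k = (1/n) Σ_j ω^{-jk} w^j` of `w`. -/
def fM (n : ℕ) [NeZero n] (k : Fin n) : Matrix (Fin n) (Fin n) ℂ :=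
  ((n : ℂ))⁻¹ • ∑ j : Fin n, (omega n ^ ((j : ℕ) * (k : ℕ)))⁻¹ • wM n ^ (j : ℕ)

/-- The normalized trace of a square matrix: the trace divided by the size. -/
def nτ {ι : Type*} [Fintype ι] (A : Matrix ι ι ℂ) : ℂ :=
  Matrix.trace A / (Fintype.card ι)

/-- The `N`-fold elementary tensor `A_0 ⊗ ⋯ ⊗ A_{N-1}` of `n × n` matrices,
realized as a matrix indexed by functions `Fin N → Fin n`. -/
def tens (n N : ℕ) (A : Fin N → Matrix (Fin n) (Fin n) ℂ) :
    Matrix (Fin N → Fin n) (Fin N → Fin n) ℂ :=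
  Matrix.of fun x y => ∏ k, A k (x k) (y k)

/-- `u_s = 1^{⊗(s-1)} ⊗ v ⊗ 1^{⊗…}` where `v = Σ_i w^i ⊗ f_i` occupies factors
`s-1` and `s` of the `N`-fold tensor power. -/
def uM (n N : ℕ) [NeZero n] (s : ℕ) : Matrix (Fin N → Fin n) (Fin N → Fin n) ℂ :=
  ∑ i : Fin n, tens n N fun k =>
    if (k : ℕ) + 1 = s then wM n ^ (i : ℕ)
    else if (k : ℕ) = s then fM n i
    else 1

/-- `U_m = u_1 u_2 ⋯ u_m` inside the `N`-fold tensor power. -/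
def UM (n N m : ℕ) [NeZero n] : Matrix (Fin N → Fin n) (Fin N → Fin n) ℂ :=
  (((List.range m).map fun s => uM n N (s + 1))).prod

/-- `F_r = f_r ⊗ 1 ⊗ ⋯ ⊗ 1` inside the `N`-fold tensor power. -/
def FM (n N : ℕ) [NeZero n] (r : Fin n) : Matrix (Fin N → Fin n) (Fin N → Fin n) ℂ :=
  tens n N fun k => if (k : ℕ) = 0 then fM n r else 1

/-- `E(i) = e_{i_1} ⊗ ⋯ ⊗ e_{i_m} ⊗ 1 ⊗ ⋯ ⊗ 1` inside the `N`-fold tensor power,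
with the `e`'s occupying factors `0, …, m-1`. -/
def EM (n N m : ℕ) (i : Fin m → Fin n) : Matrix (Fin N → Fin n) (Fin N → Fin n) ℂ :=
  tens n N fun k => if h : (k : ℕ) < m then eM n (i ⟨(k : ℕ), h⟩) else 1

/-!
Split `u_m = Σᵢ Tᵢ` with `Tᵢ = 1 ⊗ ⋯ ⊗ wⁱ ⊗ fᵢ`. The `fᵢ` are pairwise orthogonal self-adjoint
projections and the last factor of `e_{j_1} ⊗ ⋯ ⊗ e_{j_m} ⊗ 1` is `1`, so every cross term
`Tᵢ E Tᵢ'ᴴ` has the factor `fᵢ fᵢ' = 0` and vanishes. The diagonal terms are computed factorwise: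
`wⁱ e_p (wⁱ)ᴴ = e_{p-i}` and `fᵢ 1 fᵢ = fᵢ`. The projection identities follow from the entry
formula `f_k(a,b) = ω^{(a-b)k} / n` and the orthogonality of the characters of `ℤ/n`.
-/

namespace MatrixTensorPower

variable {n : ℕ}

section Tensor

variable {N : ℕ}

lemma tens_mul_tens (A B : Fin N → Matrix (Fin n) (Fin n) ℂ) :
    tens n N A * tens n N B = tens n N fun k => A k * B k := by
  ext x y
  simp only [tens, Matrix.of_apply, Matrix.mul_apply, Finset.prod_univ_sum, Fintype.piFinset_univ,
    Finset.prod_mul_distrib]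

lemma conjTranspose_tens (A : Fin N → Matrix (Fin n) (Fin n) ℂ) :
    (tens n N A)ᴴ = tens n N fun k => (A k)ᴴ := by
  ext x y
  simp [tens, Matrix.conjTranspose_apply, star_prod]

lemma tens_eq_zero {A : Fin N → Matrix (Fin n) (Fin n) ℂ} (k : Fin N) (hk : A k = 0) :
    tens n N A = 0 := by
  ext x y
  exact Finset.prod_eq_zero (Finset.mem_univ k) (by simp [hk])

lemma sum_tens_mul_tens_mul_conjTranspose {ι : Type*} [Fintype ι]
    (A : ι → Fin N → Matrix (Fin n) (Fin n) ℂ) (B : Fin N → Matrix (Fin n) (Fin n) ℂ) (k : Fin N)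
    (horth : ∀ i i', i ≠ i' → A i k * B k * (A i' k)ᴴ = 0) :
    (∑ i, tens n N (A i)) * tens n N B * (∑ i, tens n N (A i))ᴴ =
      ∑ i, tens n N fun l => A i l * B l * (A i l)ᴴ := by
  classical
  simp only [conjTranspose_sum, conjTranspose_tens, Finset.sum_mul, Finset.mul_sum, tens_mul_tens]
  refine Finset.sum_congr rfl fun i _ => Finset.sum_eq_single i (fun i' _ hi' => ?_) (by simp)
  exact tens_eq_zero k (horth i' i hi')

end Tensor

open Fin.CommRing

variable [NeZero n]

variable (n) in
def finAddChar : AddChar (Fin n) ℂ :=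
  ZMod.stdAddChar.compAddMonoidHom (ZMod.finEquiv n : Fin n →+ ZMod n)

lemma omega_pow (k : ℕ) : omega n ^ k = finAddChar n (k : Fin n) := by
  have hk : ZMod.finEquiv n (k : Fin n) = ((k : ℤ) : ZMod n) := by simp
  rw [finAddChar, AddChar.compAddMonoidHom_apply, AddMonoidHom.coe_coe, hk, ZMod.stdAddChar_coe,
    omega, ← Complex.exp_nat_mul]
  push_cast
  ring_nf

lemma omega_pow_val_mul_val (x y : Fin n) :
    omega n ^ ((x : ℕ) * (y : ℕ)) = finAddChar n (x * y) := by
  rw [omega_pow, Nat.cast_mul, Fin.cast_val_eq_self, Fin.cast_val_eq_self]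

lemma star_finAddChar (x : Fin n) : star (finAddChar n x) = finAddChar n (-x) := by
  rw [AddChar.map_neg_eq_inv, finAddChar, AddChar.compAddMonoidHom_apply, ZMod.stdAddChar_apply,
    ← Circle.coe_inv, Circle.coe_inv_eq_conj]
  rfl

lemma sum_finAddChar_mul (d : Fin n) :
    ∑ t : Fin n, finAddChar n (t * d) = if d = 0 then (n : ℂ) else 0 := by
  let e := ZMod.finEquiv n
  have hsum : ∑ t : Fin n, finAddChar n (t * d) = ∑ x : ZMod n, ZMod.stdAddChar (x * e d) := by
    rw [← e.toEquiv.sum_comp]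
    simp [finAddChar, e]
  simp [hsum, AddChar.sum_mulShift _ (ZMod.isPrimitive_stdAddChar n), ZMod.card,
    map_eq_zero_iff _ e.injective]

lemma wM_pow_apply (t : ℕ) (a b : Fin n) :
    (wM n ^ t) a b = if b = a + t then 1 else 0 := by
  induction t generalizing b with
  | zero => simp [Matrix.one_apply, eq_comm]
  | succ t ih =>
    rw [pow_succ, Matrix.mul_apply, Finset.sum_eq_single (a + t)]
    · rw [ih, if_pos rfl, one_mul]
      simp only [wM, of_apply]
      push_cast
      rw [add_assoc]
    · intro c _ hc
      rw [ih, if_neg hc, zero_mul]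
    · simp

lemma wM_pow_mul_eM_mul_conjTranspose (t : ℕ) (p : Fin n) :
    wM n ^ t * eM n p * (wM n ^ t)ᴴ = eM n (p - t) := by
  ext a b
  have h : (wM n ^ t * eM n p * (wM n ^ t)ᴴ) a b = (wM n ^ t) a p * star ((wM n ^ t) b p) := by
    rw [Matrix.mul_apply, Finset.sum_eq_single p (fun c _ hc => by
      rw [eM, mul_single_apply_of_ne _ _ _ _ _ hc, zero_mul]) (by simp), eM,
      mul_single_apply_same, mul_one, conjTranspose_apply]
  rw [h, wM_pow_apply, wM_pow_apply, eM, Matrix.single_apply]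
  simp only [sub_eq_iff_eq_add]
  by_cases ha : p = a + t <;> simp [ha]

lemma fM_apply (k a b : Fin n) : fM n k a b = (n : ℂ)⁻¹ * finAddChar n ((a - b) * k) := by
  rw [fM, Matrix.smul_apply, Matrix.sum_apply, Finset.sum_eq_single (b - a)]
  · simp [wM_pow_apply, omega_pow_val_mul_val, ← AddChar.map_neg_eq_inv, ← neg_mul]
  · intro c _ hc
    rw [Matrix.smul_apply, wM_pow_apply, Fin.cast_val_eq_self, if_neg, smul_zero]
    rintro rfl
    exact hc (by ring)
  · simp

lemma conjTranspose_fM (k : Fin n) : (fM n k)ᴴ = fM n k := by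
  ext a b
  rw [Matrix.conjTranspose_apply, fM_apply, fM_apply, star_mul', star_finAddChar]
  simp [← neg_mul]

lemma fM_mul_fM (k l : Fin n) : fM n k * fM n l = if k = l then fM n k else 0 := by
  ext a b
  have hterm : ∀ c, fM n k a c * fM n l c b =
      (n : ℂ)⁻¹ * (n : ℂ)⁻¹ * finAddChar n ((a - b) * l) * finAddChar n ((c - a) * (l - k)) := by
    intro c
    rw [fM_apply, fM_apply, mul_mul_mul_comm, ← AddChar.map_add_eq_mul,
      show (a - c) * k + (c - b) * l = (a - b) * l + (c - a) * (l - k) by ring,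
      AddChar.map_add_eq_mul]
    ring
  rw [Matrix.mul_apply, Finset.sum_congr rfl fun c _ => hterm c, ← Finset.mul_sum,
    Fintype.sum_equiv (Equiv.subRight a) (fun c => finAddChar n ((c - a) * (l - k)))
      (fun t => finAddChar n (t * (l - k))) (fun _ => rfl),
    sum_finAddChar_mul]
  by_cases h : k = l
  · subst h
    rw [sub_self, if_pos rfl, if_pos rfl, fM_apply]
    field_simp [NeZero.ne n]
  · simp [h, sub_eq_zero, Ne.symm h]

end MatrixTensorPower

open MatrixTensorPower in
/-- in `M_n(ℂ)^{⊗(m+1)}` with `m ≥ 1`, conjugating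
`e_{j_1} ⊗ ⋯ ⊗ e_{j_m} ⊗ 1` by `u_m` gives
`e_{j_1} ⊗ ⋯ ⊗ e_{j_{m-1}} ⊗ (Σ_k e_{j_m - k} ⊗ f_k)`. -/
theorem statement12 (n : ℕ) [NeZero n] (m : ℕ) (hm : 1 ≤ m)
    (j : Fin m → Fin n) :
    uM n (m + 1) m * EM n (m + 1) m j * (uM n (m + 1) m)ᴴ =
      ∑ k : Fin n, tens n (m + 1) fun l : Fin (m + 1) =>
        if h : (l : ℕ) < m - 1 then eM n (j ⟨(l : ℕ), by omega⟩)
        else if (l : ℕ) = m - 1 then eM n (j ⟨m - 1, by omega⟩ - k)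
        else fM n k := by
  rw [uM, EM, sum_tens_mul_tens_mul_conjTranspose _ _ (Fin.last m)]
  · refine Finset.sum_congr rfl fun i _ => congrArg (tens n (m + 1)) (funext fun l => ?_)
    have hl := l.isLt
    by_cases hlt : (l : ℕ) < m - 1
    · simp [hlt, show (l : ℕ) + 1 ≠ m by omega, show (l : ℕ) ≠ m by omega,
        show (l : ℕ) < m by omega]
    by_cases hprev : (l : ℕ) = m - 1
    · simp [hprev, show m - 1 + 1 = m by omega, show m - 1 < m by omega,
        wM_pow_mul_eM_mul_conjTranspose, -conjTranspose_pow]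
    have hlast : (l : ℕ) = m := by omega
    simp [hlast, show ¬m < m - 1 by omega, show m ≠ m - 1 by omega, conjTranspose_fM, fM_mul_fM]
  · intro i i' hne
    simp [conjTranspose_fM, fM_mul_fM, hne]
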